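/- (Proposition 1, lower bound) Suppose X^n ⊂ ℝ^d (d ≥ 2) is in general position. Then the finite sample additional breakdown point of Tukey's halfspace median satisfies ε(T*, X^n) ≥ ⌈n/d⌉ / (n + ⌈n/d⌉). -/

import Mathlib

open scoped RealInnerProductSpace
open MeasureTheory

noncomputable section

/-- `E d` is the Euclidean space `ℝ^d`. -/
abbrev E (d : ℕ) : Type := EuclideanSpace ℝ (Fin d)

/-- A sample `X` of `n` points in `ℝ^d` is in general position if no affine hyperplane
(encoded as `{x | ⟪v, x⟫ = c}` for some `v ≠ 0`) contains more than `d` of the points. -/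
def inGeneralPosition {d n : ℕ} (X : Fin n → E d) : Prop :=
  ∀ v : E d, v ≠ 0 → ∀ c : ℝ, ({i : Fin n | ⟪v, X i⟫ = c} : Set (Fin n)).ncard ≤ d

/-- Number of sample points in the closed halfspace `{z | ⟪u, z⟫ ≤ ⟪u, x⟫}`. -/
def sideCount {d n : ℕ} (X : Fin n → E d) (u x : E d) : ℕ :=
  ({i : Fin n | ⟪u, X i⟫ ≤ ⟪u, x⟫} : Set (Fin n)).ncard

/-- Tukey's halfspace depth of `x` with respect to the sample `X`. -/
def depth {d n : ℕ} (X : Fin n → E d) (x : E d) : ℝ :=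
  sInf {r : ℝ | ∃ u : E d, ‖u‖ = 1 ∧ r = (sideCount X u x : ℝ) / (n : ℝ)}

/-- The maximum Tukey depth `λ*` of the sample `X`. -/
def maxDepth {d n : ℕ} (X : Fin n → E d) : ℝ :=
  sSup (Set.range (depth X))

/-- The set `M(X)` of deepest points. -/
def MSet {d n : ℕ} (X : Fin n → E d) : Set (E d) :=
  {x | depth X x = maxDepth X}

/-- `U_x`: the set of optimal (unit) directions realizing the depth at `x`. -/
def USet {d n : ℕ} (X : Fin n → E d) (x : E d) : Set (E d) :=
  {u | ‖u‖ = 1 ∧ (sideCount X u x : ℝ) / (n : ℝ) = depth X x}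

/-- `H_{x,y}`: the open hemisphere of unit directions `u` with `⟪u, x⟫ < ⟪u, y⟫`. -/
def HSet {d : ℕ} (x y : E d) : Set (E d) :=
  {u | ‖u‖ = 1 ∧ ⟪u, x⟫ < ⟪u, y⟫}

/-- `B_z`. -/
def BSet {d n : ℕ} (X : Fin n → E d) (z : E d) : Set (E d) :=
  {x | x ∈ MSet X ∧ USet X x ∩ HSet x z = ∅}

/-- `B̃_z = B_z \ {z}`. -/
def BTilde {d n : ℕ} (X : Fin n → E d) (z : E d) : Set (E d) :=
  BSet X z \ {z}

/-- `v` is a unit vector normal to an affine hyperplane spanned by `d` of the sample points. -/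
def normalToSampleHyperplane {d n : ℕ} (X : Fin n → E d) (v : E d) : Prop :=
  ‖v‖ = 1 ∧ ∃ (s : Finset (Fin n)) (c : ℝ), s.card = d ∧
    (affineSpan ℝ (X '' (s : Set (Fin n))) : Set (E d)) = {x : E d | ⟪v, x⟫ = c}

/-- Condition (2.1) on a unit direction `u`. -/
def cond21 {d n : ℕ} (X : Fin n → E d) (u : E d) : Prop :=
  ∀ v : E d, normalToSampleHyperplane X v → ⟪u, v⟫ ≠ 0

/-- `A` represents the columns of a `d × (d-1)` matrix which together with the unit
vector `u` form an orthonormal basis of `ℝ^d`. -/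
def IsAu {d : ℕ} (u : E d) (A : Fin (d - 1) → E d) : Prop :=
  ‖u‖ = 1 ∧ Orthonormal ℝ A ∧ ∀ j, ⟪A j, u⟫ = 0

/-- The `A_u`-projection `A_u^T x ∈ ℝ^{d-1}` of a point `x ∈ ℝ^d`. -/
def proj {d : ℕ} (A : Fin (d - 1) → E d) (x : E d) : E (d - 1) :=
  (WithLp.equiv 2 (Fin (d - 1) → ℝ)).symm (fun j => ⟪A j, x⟫)

/-- The embedding `A_u x = ∑ j x_j A_j ∈ ℝ^d` of a point `x ∈ ℝ^{d-1}`. -/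
def embed {d : ℕ} (A : Fin (d - 1) → E d) (x : E (d - 1)) : E d :=
  ∑ j, x j • A j

/-- `λ₀ = inf_{u ∈ S^{d-1}} λ*(X_u^n)`, the infimum over all directions of the maximum
Tukey depth of the projected sample. -/
def lambda0 {d n : ℕ} (X : Fin n → E d) : ℝ :=
  sInf {r : ℝ | ∃ (u : E d) (A : Fin (d - 1) → E d),
    IsAu u A ∧ r = maxDepth (fun i => proj A (X i))}

/-- The average (barycenter) of a set `K ⊆ ℝ^d`, taken with respect to the Hausdorff
measure of dimension equal to the affine dimension of `K`. -/
def setAverage {d : ℕ} (K : Set (E d)) : E d :=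
  (μH[(Module.finrank ℝ (affineSpan ℝ K).direction : ℝ)] K).toReal⁻¹ •
    ∫ x in K, x ∂(μH[(Module.finrank ℝ (affineSpan ℝ K).direction : ℝ)])

/-- Tukey's halfspace median: the average of all deepest points. -/
def TukeyMedian {d n : ℕ} (X : Fin n → E d) : E d :=
  setAverage (MSet X)

/-- `m` contaminating points suffice to break down the Tukey median at `X`. -/
def breaksDown {d n : ℕ} (X : Fin n → E d) (m : ℕ) : Prop :=
  ∀ C : ℝ, ∃ Y : Fin m → E d, C < ‖TukeyMedian (Fin.append X Y) - TukeyMedian X‖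

/-- The finite sample (additional) breakdown point of the Tukey median at `X`. -/
def FSBP {d n : ℕ} (X : Fin n → E d) : ℝ :=
  sInf {r : ℝ | ∃ m : ℕ, 1 ≤ m ∧ breaksDown X m ∧ r = (m : ℝ) / ((n : ℝ) + (m : ℝ))}


/-!
With `m` added points and `d * m < n`, the `N = n + m` points satisfy `(d + 1) m < N`, so by
the centerpoint theorem (Helly's theorem applied to the convex hulls of all `(N - m)`-subsets)
some point has depth at least `(m + 1) / N`. A point farther from the origin than every
original point has depth at most `m / N`, witnessed by the halfspace facing away from the
origin, which contains only added points. Hence every deepest point, and therefore their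
barycenter, stays in a fixed ball, and fewer than `n / d` points cannot break the median down.
Conversely `n + 1` copies of one far point become the unique deepest point, so breakdown
does occur and the infimum defining the breakdown point is over a nonempty set.
-/

open Finset Module Metric

section Depth

variable {d n : ℕ}

lemma exists_norm_eq_one (hd : 0 < d) : ∃ u : E d, ‖u‖ = 1 := by
  have : Nonempty (Fin d) := ⟨⟨0, hd⟩⟩
  exact exists_norm_eq (E d) zero_le_one

lemma ncard_setOf_append {α : Type*} {m : ℕ} (X : Fin n → α) (Y : Fin m → α) (P : α → Prop) :
    {i | P (Fin.append X Y i)}.ncard = {j | P (X j)}.ncard + {j | P (Y j)}.ncard := by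
  classical
  simp only [Set.ncard_eq_toFinset_card', Set.toFinset_ofPred, card_filter, Fin.sum_univ_add,
    Fin.append_left, Fin.append_right]

lemma sideCount_append {m : ℕ} (X : Fin n → E d) (Y : Fin m → E d) (u x : E d) :
    sideCount (Fin.append X Y) u x = sideCount X u x + sideCount Y u x :=
  ncard_setOf_append X Y fun z => ⟪u, z⟫ ≤ ⟪u, x⟫

lemma sideCount_le (X : Fin n → E d) (u x : E d) : sideCount X u x ≤ n :=
  (Set.ncard_le_card _).trans_eq (Nat.card_fin n)

lemma sideCount_eq_zero {X : Fin n → E d} {u x : E d} (h : ∀ j, ⟪u, x⟫ < ⟪u, X j⟫) :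
    sideCount X u x = 0 :=
  (Set.ncard_eq_zero (Set.toFinite _)).2 <|
    Set.eq_empty_of_forall_notMem fun j hj => (h j).not_ge hj

lemma sideCount_smul (X : Fin n → E d) {c : ℝ} (hc : 0 < c) (u x : E d) :
    sideCount X (c • u) x = sideCount X u x := by
  simp only [sideCount, real_inner_smul_left, mul_le_mul_iff_right₀ hc]

lemma depth_le_of_ne_zero (X : Fin n → E d) (x : E d) {u : E d} (hu : u ≠ 0) :
    depth X x ≤ sideCount X u x / n := by
  have hbdd : BddBelow {r : ℝ | ∃ u : E d, ‖u‖ = 1 ∧ r = sideCount X u x / n} :=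
    ⟨0, by rintro _ ⟨u, -, rfl⟩; positivity⟩
  have hunit : ‖‖u‖⁻¹ • u‖ = 1 := by
    rw [norm_smul, norm_inv, norm_norm, inv_mul_cancel₀ (norm_ne_zero_iff.2 hu)]
  refine (csInf_le hbdd ⟨_, hunit, rfl⟩).trans_eq ?_
  rw [sideCount_smul X (inv_pos.2 (norm_pos_iff.2 hu))]

lemma le_depth (hd : 0 < d) {X : Fin n → E d} {x : E d} {b : ℝ}
    (h : ∀ u : E d, ‖u‖ = 1 → b ≤ sideCount X u x / n) : b ≤ depth X x := by
  obtain ⟨u, hu⟩ := exists_norm_eq_one hd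
  exact le_csInf ⟨_, u, hu, rfl⟩ fun _ ⟨v, hv, hr⟩ => hr ▸ h v hv

lemma depth_le_one (hd : 0 < d) (X : Fin n → E d) (x : E d) : depth X x ≤ 1 := by
  obtain ⟨u, hu⟩ := exists_norm_eq_one hd
  refine (depth_le_of_ne_zero X x (norm_ne_zero_iff.1 (hu.symm ▸ one_ne_zero))).trans ?_
  exact div_le_one_of_le₀ (mod_cast sideCount_le X u x) n.cast_nonneg

lemma depth_le_maxDepth (hd : 0 < d) (X : Fin n → E d) (x : E d) : depth X x ≤ maxDepth X :=
  le_csSup ⟨1, by rintro _ ⟨y, rfl⟩; exact depth_le_one hd X y⟩ ⟨x, rfl⟩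

lemma MSet_eq_singleton (hd : 0 < d) {X : Fin n → E d} {y : E d}
    (h : ∀ x, x ≠ y → depth X x < depth X y) : MSet X = {y} := by
  have hmax : maxDepth X = depth X y := by
    refine le_antisymm (csSup_le (Set.range_nonempty _) ?_) (depth_le_maxDepth hd X y)
    rintro _ ⟨x, rfl⟩
    rcases eq_or_ne x y with rfl | hxy
    exacts [le_rfl, (h x hxy).le]
  ext x
  simp only [MSet, Set.mem_ofPred_eq, Set.mem_singleton_iff, hmax]
  exact ⟨fun hx => by_contra fun hxy => (h x hxy).ne hx, fun hx => hx ▸ rfl⟩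

end Depth

section Centerpoint

variable {V : Type*} [NormedAddCommGroup V] [InnerProductSpace ℝ V] [FiniteDimensional ℝ V]

lemma exists_forall_mem_of_card_mul_lt {α : Type*} [Fintype α] [DecidableEq α]
    {G : Finset (Finset α)} {k : ℕ} (hG : ∀ I ∈ G, #Iᶜ ≤ k) (h : #G * k < Fintype.card α) :
    ∃ a, ∀ I ∈ G, a ∈ I := by
  by_contra! hcover
  have hsub : (univ : Finset α) ⊆ G.biUnion compl := fun a _ => by
    obtain ⟨I, hI, haI⟩ := hcover a
    exact mem_biUnion.2 ⟨I, hI, mem_compl.2 haI⟩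
  have : Fintype.card α ≤ #G * k := calc
    Fintype.card α = #(univ : Finset α) := card_univ.symm
    _ ≤ #(G.biUnion compl) := card_le_card hsub
    _ ≤ ∑ I ∈ G, #Iᶜ := card_biUnion_le
    _ ≤ ∑ _I ∈ G, k := sum_le_sum hG
    _ = #G * k := by rw [sum_const, smul_eq_mul]
  omega

lemma exists_mem_convexHull_of_card_compl_le {N k : ℕ} (Z : Fin N → V)
    (hk : (finrank ℝ V + 1) * k < N) :
    ∃ x, ∀ I : Finset (Fin N), #Iᶜ ≤ k → x ∈ convexHull ℝ (Z '' I) := by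
  obtain ⟨x, hx⟩ := Convex.helly_theorem' (𝕜 := ℝ)
    (s := (univ : Finset (Finset (Fin N))).filter fun I => #Iᶜ ≤ k)
    (F := fun I : Finset (Fin N) => convexHull ℝ (Z '' I)) (fun _ _ => convex_convexHull ℝ _)
    fun G hG hGcard => by
      obtain ⟨a, ha⟩ := exists_forall_mem_of_card_mul_lt (k := k) (G := G)
        (fun I hI => (mem_filter.1 (hG hI)).2)
        (by rw [Fintype.card_fin]; exact (Nat.mul_le_mul_right k hGcard).trans_lt hk)
      exact ⟨Z a, Set.mem_iInter₂.2 fun I hI => subset_convexHull ℝ _ ⟨a, ha I hI, rfl⟩⟩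
  exact ⟨x, fun I hI => Set.mem_iInter₂.1 hx I (by simpa using hI)⟩

/-- The centerpoint theorem for a finite family of points. -/
lemma exists_forall_lt_ncard_setOf_inner_le {N k : ℕ} (Z : Fin N → V)
    (hk : (finrank ℝ V + 1) * k < N) :
    ∃ x, ∀ u : V, k < {i | ⟪u, Z i⟫ ≤ ⟪u, x⟫}.ncard := by
  classical
  obtain ⟨x, hx⟩ := exists_mem_convexHull_of_card_compl_le Z hk
  refine ⟨x, fun u => not_le.1 fun hle => ?_⟩
  set I := univ.filter fun i => ⟪u, x⟫ < ⟪u, Z i⟫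
  have hI : #Iᶜ ≤ k := by
    simpa [I, compl_filter, Set.ncard_eq_toFinset_card'] using hle
  have hhalf : convexHull ℝ (Z '' I) ⊆ {z | ⟪u, x⟫ < ⟪u, z⟫} :=
    convexHull_min (by rintro _ ⟨i, hi, rfl⟩; simpa [I] using hi)
      (convex_halfSpace_gt (innerₛₗ ℝ u).isLinear _)
  exact lt_irrefl _ (show ⟪u, x⟫ < ⟪u, x⟫ from hhalf (hx I hI))

end Centerpoint

section Barycenter

variable {d : ℕ}

lemma norm_setAverage_le {K : Set (E d)} {R : ℝ} (hR : 0 ≤ R) (hK : K ⊆ closedBall 0 R) :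
    ‖setAverage K‖ ≤ R := by
  set μ : Measure (E d) := μH[(finrank ℝ (affineSpan ℝ K).direction : ℝ)]
  have hμ : setAverage K = ⨍ x in K, x ∂μ := by rw [setAverage_eq, measureReal_def]; rfl
  rw [hμ, ← mem_closedBall_zero_iff]
  rcases eq_or_ne (μ K) 0 with h0 | h0
  · simp [Measure.restrict_eq_zero.2 h0, hR]
  rcases eq_or_ne (μ K) ⊤ with htop | htop
  · simp [setAverage_eq, measureReal_def, htop, hR]
  have hae : ∀ᵐ x ∂μ.restrict K, x ∈ closedBall (0 : E d) R :=
    ae_restrict_of_ae_restrict_of_subset hK (ae_restrict_of_forall_mem measurableSet_closedBall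
      fun _ hx => hx)
  refine (convex_closedBall 0 R).set_average_mem isClosed_closedBall h0 htop hae ?_
  exact Measure.integrableOn_of_bounded (M := R) htop aestronglyMeasurable_id
    (hae.mono fun x hx => mem_closedBall_zero_iff.1 hx)

lemma setAverage_singleton (y : E d) : setAverage ({y} : Set (E d)) = y := by
  have hdim : (finrank ℝ (affineSpan ℝ ({y} : Set (E d))).direction : ℝ) = 0 := by
    rw [direction_affineSpan, vectorSpan_singleton, finrank_bot, Nat.cast_zero]
  rw [setAverage, hdim, Measure.hausdorffMeasure_zero_singleton, Measure.restrict_singleton,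
    Measure.hausdorffMeasure_zero_singleton]
  simp

end Barycenter

section Breakdown

variable {d n : ℕ}

lemma depth_append_le_of_norm_lt {m : ℕ} (X : Fin n → E d) (Y : Fin m → E d) {R : ℝ}
    (hR0 : 0 ≤ R) (hR : ∀ j, ‖X j‖ ≤ R) {x : E d} (hx : R < ‖x‖) :
    depth (Fin.append X Y) x ≤ m / (n + m : ℕ) := by
  have hx0 : x ≠ 0 := norm_pos_iff.1 (hR0.trans_lt hx)
  have hX : sideCount X (-x) x = 0 := sideCount_eq_zero fun j => by
    rw [inner_neg_left, inner_neg_left, neg_lt_neg_iff, real_inner_self_eq_norm_mul_norm]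
    nlinarith [real_inner_le_norm x (X j), hR j, norm_nonneg (X j)]
  refine (depth_le_of_ne_zero _ x (neg_ne_zero.2 hx0)).trans ?_
  rw [sideCount_append, hX, zero_add]
  gcongr
  exact_mod_cast sideCount_le Y (-x) x

lemma MSet_append_subset_closedBall (hd : 0 < d) {m : ℕ} (X : Fin n → E d) (Y : Fin m → E d)
    (hm : d * m < n) {R : ℝ} (hR0 : 0 ≤ R) (hR : ∀ j, ‖X j‖ ≤ R) :
    MSet (Fin.append X Y) ⊆ closedBall 0 R := by
  intro x (hx : _ = _)
  by_contra hfar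
  rw [mem_closedBall_zero_iff, not_le] at hfar
  obtain ⟨c, hc⟩ := exists_forall_lt_ncard_setOf_inner_le (Fin.append X Y) (k := m)
    (by rw [finrank_euclideanSpace_fin]; linarith)
  have hdeep : ((m + 1 : ℕ) : ℝ) / (n + m : ℕ) ≤ maxDepth (Fin.append X Y) :=
    (le_depth hd fun u _ => by gcongr; exact hc u).trans (depth_le_maxDepth hd _ c)
  have := hdeep.trans (hx ▸ depth_append_le_of_norm_lt X Y hR0 hR hfar)
  rw [div_le_div_iff_of_pos_right (by exact_mod_cast (by omega : 0 < n + m))] at this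
  norm_num at this

lemma not_breaksDown_of_mul_lt (hd : 0 < d) (X : Fin n → E d) {m : ℕ} (hm : d * m < n) :
    ¬ breaksDown X m := by
  intro h
  have hR (j) : ‖X j‖ ≤ ∑ i, ‖X i‖ :=
    single_le_sum (f := fun i => ‖X i‖) (fun i _ => norm_nonneg _) (mem_univ j)
  obtain ⟨Y, hY⟩ := h (∑ i, ‖X i‖ + ‖TukeyMedian X‖)
  have hR0 : 0 ≤ ∑ i, ‖X i‖ := sum_nonneg fun i _ => norm_nonneg (X i)
  have : ‖TukeyMedian (Fin.append X Y)‖ ≤ ∑ i, ‖X i‖ :=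
    norm_setAverage_le hR0 (MSet_append_subset_closedBall hd X Y hm hR0 hR)
  linarith [norm_sub_le (TukeyMedian (Fin.append X Y)) (TukeyMedian X)]

lemma MSet_append_const (hd : 0 < d) (X : Fin n → E d) {m : ℕ} (hnm : n < m) (y : E d) :
    MSet (Fin.append X fun _ : Fin m => y) = {y} := by
  refine MSet_eq_singleton hd fun x hxy => ?_
  have hyx : y - x ≠ 0 := sub_ne_zero.2 hxy.symm
  have hout : sideCount (fun _ : Fin m => y) (y - x) x = 0 := sideCount_eq_zero fun _ => by
    rw [← sub_pos, ← inner_sub_right, real_inner_self_pos]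
    exact hyx
  have hin (u : E d) : sideCount (fun _ : Fin m => y) u y = m := by
    simp [sideCount]
  calc depth _ x ≤ sideCount (Fin.append X fun _ => y) (y - x) x / (n + m : ℕ) :=
        depth_le_of_ne_zero _ x hyx
    _ ≤ n / (n + m : ℕ) := by
        rw [sideCount_append, hout, add_zero]
        gcongr
        exact_mod_cast sideCount_le X _ x
    _ < m / (n + m : ℕ) :=
        div_lt_div_of_pos_right (mod_cast hnm) (mod_cast (by omega : 0 < n + m))
    _ ≤ depth _ y := le_depth hd fun u _ => by
        rw [sideCount_append, hin]
        gcongr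
        omega

lemma breaksDown_succ (hd : 0 < d) (X : Fin n → E d) : breaksDown X (n + 1) := by
  intro C
  obtain ⟨e, he⟩ := exists_norm_eq_one hd
  refine ⟨fun _ => TukeyMedian X + (|C| + 1) • e, ?_⟩
  rw [TukeyMedian, MSet_append_const hd X n.lt_succ_self, setAverage_singleton,
    add_sub_cancel_left, norm_smul, he, mul_one, Real.norm_of_nonneg (by positivity)]
  linarith [le_abs_self C]

end Breakdown

lemma le_FSBP {d n : ℕ} {X : Fin n → E d} {b : ℝ} (hne : ∃ m, 1 ≤ m ∧ breaksDown X m)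
    (h : ∀ m : ℕ, breaksDown X m → b ≤ m / (n + m)) : b ≤ FSBP X := by
  obtain ⟨m, hm, hbm⟩ := hne
  exact le_csInf ⟨_, m, hm, hbm, rfl⟩ fun _ ⟨m, _, hbm, hr⟩ => hr ▸ h m hbm

lemma div_add_self_le_div_add_self {a b c : ℝ} (hc : 0 ≤ c) (ha : 0 ≤ a) (hab : a ≤ b) :
    a / (c + a) ≤ b / (c + b) := by
  rcases ha.eq_or_lt with rfl | ha
  · simp only [zero_div]; positivity
  rw [div_le_div_iff₀ (by linarith) (by linarith)]
  nlinarith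

theorem proposition1_lower_general {d n : ℕ} (hd : 2 ≤ d) (X : Fin n → E d) :
    ((⌈(n : ℝ) / (d : ℝ)⌉ : ℝ)) / ((n : ℝ) + (⌈(n : ℝ) / (d : ℝ)⌉ : ℝ)) ≤ FSBP X := by
  have hd0 : 0 < d := by omega
  refine le_FSBP ⟨n + 1, by omega, breaksDown_succ hd0 X⟩ fun m hm => ?_
  have hnm : n ≤ d * m := not_lt.1 fun h => not_breaksDown_of_mul_lt hd0 X h hm
  have hceil : ⌈(n : ℝ) / d⌉ ≤ m := Int.ceil_le.2 <| by
    rw [div_le_iff₀ (by positivity)]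
    exact_mod_cast hnm.trans_eq (mul_comm d m)
  exact div_add_self_le_div_add_self n.cast_nonneg (by positivity) (mod_cast hceil)

/-- **Proposition 1, lower bound.** If `X` is in general position in `ℝ^d`
(`d ≥ 2`), then `ε(T*, Xⁿ) ≥ ⌈n/d⌉ / (n + ⌈n/d⌉)`. -/
theorem proposition1_lower {d n : ℕ} (hd : 2 ≤ d) (X : Fin n → E d)
    (hX : inGeneralPosition X) :
    ((⌈(n : ℝ) / (d : ℝ)⌉ : ℝ)) / ((n : ℝ) + (⌈(n : ℝ) / (d : ℝ)⌉ : ℝ)) ≤ FSBP X :=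
  proposition1_lower_general hd X
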